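/- For all natural numbers n ≥ 1 and l ≥ 0, setting m := n + 2l, the coefficient t_l(n-1) admits the closed form t_l(n-1) = (m / (2·(n-1)!)) · ∑_{j=0}^{m-n} ((j+n-1)!/j!) · L_m^j · s(m-1, j+n-1), where s(m-1, k) denotes the (signed) Stirling number of the first kind, i.e. the coefficient of X^k in the descending factorial polynomial X(X−1)⋯(X−(m−2)) (with the empty product equal to 1 when m = 1), and L_m^j := ∑_{i=0}^{m} (i−1)^j / (i! · (m−i)!) with the convention that (i−1)^j = 1 when i = 1 and j = 0. -/

import Mathlib

/-- The coefficients `t_k(n)`: `t_k(0) = 1` and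
`t_k(n) = ∑_{m=0}^{k} t_m(n-1)/(m + n/2)` for `n ≥ 1`. -/
noncomputable def t : ℕ → ℕ → ℝ
  | _, 0 => 1
  | k, n + 1 => ∑ m ∈ Finset.range (k + 1), t m n / ((m : ℝ) + ((n : ℝ) + 1) / 2)

/-- The descending factorial polynomial `X(X−1)⋯(X−(n−1))` (with the empty
product equal to `1` when `n = 0`). -/
noncomputable def descFactorialPoly (n : ℕ) : Polynomial ℝ :=
  ∏ i ∈ Finset.range n, (Polynomial.X - Polynomial.C (i : ℝ))

/-- The signed Stirling number of the first kind `s(n, k)`: the coefficient of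
`X^k` in the descending factorial polynomial `X(X−1)⋯(X−(n−1))`. -/
noncomputable def stirlingFirst (n k : ℕ) : ℝ := (descFactorialPoly n).coeff k

/-- Equation (33) of the paper: `L_m^j = ∑_{i=0}^{m} (i−1)^j / (i!·(m−i)!)`
(with the convention `(i−1)^j = 1` when `i = 1` and `j = 0`, which holds since
`(0 : ℝ)^(0 : ℕ) = 1`). -/
noncomputable def L (m j : ℕ) : ℝ :=
  ∑ i ∈ Finset.range (m + 1),
    ((i : ℝ) - 1) ^ j / ((Nat.factorial i : ℝ) * (Nat.factorial (m - i) : ℝ))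

/-!
Let `f_r = X(X-1)⋯(X-r+1)` and `A_k(m) = ∑ᵢ C(m,i) f_{m-1}^{(k)}(i-1)`. Expanding `f_{m-1}^{(n-1)}`
in monomials turns the right-hand side into `m/(2·(n-1)!·m!) · A_{n-1}(m)`. From
`f_{r+1} = f_r·(X - r)`, the difference rule `f_r(x+1) - f_r(x) = r·f_{r-1}(x)` and Pascal's rule,
`A_{k+1}(m+2) = (m+1)m·A_{k+1}(m) + 2(k+1)·A_k(m+1)`, which after normalisation is the recurrence
`t_l(n) = t_{l-1}(n) + t_l(n-1)/(l + n/2)`. The initial values hold because `f_r` vanishes at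
`0, …, r-1`, while `f_r(r) = r!` and `f_r(-1) = (-1)^r r!`.
-/

open Polynomial Finset

namespace Polynomial

variable {R : Type*} [CommRing R]

theorem iterate_derivative_comp_X_sub_C (p : R[X]) (a : R) (k : ℕ) :
    derivative^[k] (p.comp (X - C a)) = (derivative^[k] p).comp (X - C a) := by
  induction k generalizing p with
  | zero => rfl
  | succ k ih => simp [derivative_comp, ih]

theorem iterate_derivative_succ_mul_X_sub_C (p : R[X]) (a : R) (k : ℕ) :
    derivative^[k + 1] (p * (X - C a)) =
      derivative^[k + 1] p * (X - C a) + (k + 1 : R[X]) * derivative^[k] p := by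
  rw [mul_sub, iterate_derivative_sub, iterate_derivative_mul_X, mul_comm p, iterate_derivative_C_mul]
  simp only [add_tsub_cancel_right, nsmul_eq_mul, Nat.cast_add, Nat.cast_one]
  ring

end Polynomial

section

variable {R : Type*} [CommRing R]

theorem iterate_derivative_descPochhammer_succ_eval (m k : ℕ) (x : R) :
    (derivative^[k + 1] (descPochhammer R (m + 1))).eval x =
      (x - m) * (derivative^[k + 1] (descPochhammer R m)).eval x +
        (k + 1) * (derivative^[k] (descPochhammer R m)).eval x := by
  rw [descPochhammer_succ_right, ← C_eq_natCast, iterate_derivative_succ_mul_X_sub_C]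
  simp only [map_natCast, eval_add, eval_mul, eval_sub, eval_X, eval_natCast, eval_one]
  ring

theorem iterate_derivative_descPochhammer_sub_comp (m k : ℕ) :
    derivative^[k] (descPochhammer R m) - (derivative^[k] (descPochhammer R m)).comp (X - C 1) =
      (m : R[X]) * (derivative^[k] (descPochhammer R (m - 1))).comp (X - C 1) := by
  rw [← iterate_derivative_comp_X_sub_C, ← iterate_derivative_comp_X_sub_C, ← iterate_derivative_sub,
    ← iterate_derivative_natCast_mul]
  cases m with
  | zero => simp
  | succ m =>
    rw [C_1, descPochhammer_succ_comp_X_sub_one, sub_sub_cancel, smul_eq_mul]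
    simp

theorem iterate_derivative_descPochhammer_eval_add_one_sub (m k : ℕ) (x : R) :
    (derivative^[k] (descPochhammer R m)).eval (x + 1) - (derivative^[k] (descPochhammer R m)).eval x =
      m * (derivative^[k] (descPochhammer R (m - 1))).eval x := by
  simpa using congrArg (eval (x + 1)) (iterate_derivative_descPochhammer_sub_comp (R := R) m k)

theorem sum_range_choose_succ_mul_cast_mul (m : ℕ) (a : ℕ → R) :
    ∑ i ∈ range (m + 2), ((m + 1).choose i : R) * (i * a i) =
      (m + 1) * ∑ i ∈ range (m + 1), (m.choose i : R) * a (i + 1) := by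
  rw [sum_range_succ', mul_sum]
  simp only [Nat.cast_zero, zero_mul, mul_zero, add_zero]
  refine sum_congr rfl fun i _ => ?_
  have h := congrArg (Nat.cast : ℕ → R) (Nat.add_one_mul_choose_eq m i)
  push_cast at h ⊢
  linear_combination (-a (i + 1)) * h

theorem sum_range_choose_succ_mul_sub_mul (m : ℕ) (a : ℕ → R) :
    ∑ i ∈ range (m + 2), ((m + 1).choose i : R) * ((m + 1 - i) * a i) =
      (m + 1) * ∑ i ∈ range (m + 1), (m.choose i : R) * a i := by
  rw [sum_range_succ, mul_sum]
  simp only [Nat.choose_self, Nat.cast_one, Nat.cast_add, sub_self, zero_mul, mul_zero, add_zero]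
  refine sum_congr rfl fun i hi => ?_
  have h := congrArg (Nat.cast : ℕ → R) (Nat.choose_mul_succ_eq m i)
  push_cast [Nat.cast_sub (mem_range.mp hi).le] at h
  linear_combination (-a i) * h

theorem sum_range_choose_succ_mul_two_mul_sub (m : ℕ) (a : ℕ → R) :
    ∑ i ∈ range (m + 2), ((m + 1).choose i : R) * ((2 * i - (m + 1)) * a i) =
      (m + 1) * ∑ i ∈ range (m + 1), (m.choose i : R) * (a (i + 1) - a i) := by
  calc _ = ∑ i ∈ range (m + 2), ((m + 1).choose i : R) * (i * a i) -
        ∑ i ∈ range (m + 2), ((m + 1).choose i : R) * ((m + 1 - i) * a i) := by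
        rw [← sum_sub_distrib]
        exact sum_congr rfl fun i _ => by ring
    _ = _ := by
        rw [sum_range_choose_succ_mul_cast_mul, sum_range_choose_succ_mul_sub_mul, ← mul_sub,
          ← sum_sub_distrib]
        simp only [mul_sub]

noncomputable def shiftedBinomialSum (m : ℕ) (p : R[X]) : R :=
  ∑ i ∈ range (m + 1), (m.choose i : R) * p.eval ((i : R) - 1)

variable (R) in
noncomputable def descPochhammerSum (k m : ℕ) : R :=
  shiftedBinomialSum m (derivative^[k] (descPochhammer R (m - 1)))

theorem descPochhammerSum_succ_add_two (k m : ℕ) :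
    descPochhammerSum R (k + 1) (m + 2) =
      (m + 1) * m * descPochhammerSum R (k + 1) m + 2 * (k + 1) * descPochhammerSum R k (m + 1) := by
  set g := derivative^[k + 1] (descPochhammer R (m + 1))
  set h := derivative^[k + 1] (descPochhammer R m)
  set q := derivative^[k] (descPochhammer R m)
  have hg (x : R) : g.eval (x - 1) + g.eval x =
      (2 * x - (m + 1)) * h.eval (x - 1) + 2 * (k + 1) * q.eval (x - 1) := by
    have hdiff := iterate_derivative_descPochhammer_eval_add_one_sub (R := R) (m + 1) (k + 1) (x - 1)
    have hrec := iterate_derivative_descPochhammer_succ_eval (R := R) m k (x - 1)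
    rw [sub_add_cancel] at hdiff
    push_cast at hdiff
    linear_combination hdiff + 2 * hrec
  have hh (x : R) : h.eval x - h.eval (x - 1) =
      m * (derivative^[k + 1] (descPochhammer R (m - 1))).eval (x - 1) := by
    have hdiff := iterate_derivative_descPochhammer_eval_add_one_sub (R := R) m (k + 1) (x - 1)
    rwa [sub_add_cancel] at hdiff
  calc descPochhammerSum R (k + 1) (m + 2)
      = ∑ i ∈ range (m + 2), ((m + 1).choose i : R) * (g.eval ((i : R) - 1) + g.eval (i : R)) := by
        refine (sum_choose_succ_mul (fun i _ => g.eval ((i : R) - 1)) (m + 1)).trans ?_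
        rw [← sum_add_distrib]
        exact sum_congr rfl fun i _ => by push_cast; ring_nf
    _ = ∑ i ∈ range (m + 2), ((m + 1).choose i : R) * ((2 * i - (m + 1)) * h.eval ((i : R) - 1)) +
          2 * (k + 1) * ∑ i ∈ range (m + 2), ((m + 1).choose i : R) * q.eval ((i : R) - 1) := by
        rw [mul_sum, ← sum_add_distrib]
        exact sum_congr rfl fun i _ => by rw [hg]; ring
    _ = _ := by
        rw [sum_range_choose_succ_mul_two_mul_sub m (fun i => h.eval ((i : R) - 1))]
        push_cast
        simp only [add_sub_cancel_right, hh, mul_left_comm _ (m : R), ← mul_sum, mul_assoc]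
        rfl

theorem descPochhammer_eval_neg_one (r : ℕ) :
    (descPochhammer R r).eval (-1) = (-1) ^ r * r.factorial := by
  induction r with
  | zero => simp
  | succ r ih =>
    rw [descPochhammer_succ_eval, ih, Nat.factorial_succ]
    push_cast
    ring

theorem descPochhammerSum_zero_succ (r : ℕ) :
    descPochhammerSum R 0 (r + 1) = (1 + (-1) ^ r) * r.factorial := by
  have hmid : ∀ i ∈ range r, ((r + 1).choose (i + 1) : R) *
      (descPochhammer R r).eval (((i + 1 : ℕ) : R) - 1) = 0 := fun i hi => by
    rw [Nat.cast_add_one, add_sub_cancel_right, descPochhammer_eval_coe_nat_of_lt (mem_range.mp hi),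
      mul_zero]
  change shiftedBinomialSum (r + 1) (descPochhammer R r) = _
  rw [shiftedBinomialSum, sum_range_succ, sum_range_succ', sum_congr rfl hmid]
  simp only [Nat.choose_self, Nat.choose_zero_right,
    Nat.cast_one, Nat.cast_zero, zero_sub, sum_const_zero, descPochhammer_eval_neg_one, Nat.cast_add,
    add_sub_cancel_right, descPochhammer_eval_eq_descFactorial, Nat.descFactorial_self]
  ring

theorem natDegree_descPochhammer_le (r : ℕ) : (descPochhammer R r).natDegree ≤ r := by
  rw [← descPochhammer_map (Int.castRingHom R)]
  exact (natDegree_map_le).trans (descPochhammer_natDegree ℤ r).le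

theorem descPochhammerSum_succ_self (k : ℕ) : descPochhammerSum R (k + 1) k = 0 := by
  rw [descPochhammerSum, iterate_derivative_eq_zero]
  · simp [shiftedBinomialSum]
  · exact (natDegree_descPochhammer_le _).trans_lt (by omega)

end

open scoped Nat

theorem descFactorialPoly_eq_descPochhammer (n : ℕ) : descFactorialPoly n = descPochhammer ℝ n := by
  induction n with
  | zero => simp [descFactorialPoly]
  | succ n ih =>
    rw [descFactorialPoly, prod_range_succ, ← descFactorialPoly, ih, descPochhammer_succ_right,
      C_eq_natCast]

theorem coeff_iterate_derivative_descPochhammer (r k j : ℕ) :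
    (derivative^[k] (descPochhammer ℝ r)).coeff j = (j + k)! / j ! * stirlingFirst r (j + k) := by
  have h := congrArg (Nat.cast : ℕ → ℝ) (Nat.factorial_mul_descFactorial (Nat.le_add_left k j))
  rw [Nat.add_sub_cancel] at h
  push_cast at h
  rw [coeff_iterate_derivative, stirlingFirst, descFactorialPoly_eq_descPochhammer, nsmul_eq_mul, ← h,
    mul_div_cancel_left₀ _ (by positivity)]

theorem sum_coeff_mul_L (p : ℝ[X]) {m d : ℕ} (hp : p.natDegree < d) :
    ∑ j ∈ range d, p.coeff j * L m j = shiftedBinomialSum m p / m ! := by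
  simp only [L, shiftedBinomialSum, mul_sum, sum_div]
  rw [sum_comm]
  refine sum_congr rfl fun i hi => ?_
  rw [eval_eq_sum_range' hp, Nat.cast_choose ℝ (mem_range_succ_iff.mp hi), mul_sum, sum_div]
  refine sum_congr rfl fun j _ => ?_
  field_simp

theorem t_zero_succ (n : ℕ) : t 0 (n + 1) = t 0 n / ((n + 1) / 2) := by
  simp [t]

theorem t_succ_succ (l n : ℕ) :
    t (l + 1) (n + 1) = t l (n + 1) + t (l + 1) n / ((l + 1 : ℕ) + (n + 1) / 2) := by
  rw [t, t, sum_range_succ]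

theorem eq_t_of_recurrence {u : ℕ → ℕ → ℝ} (h0 : ∀ l, u l 0 = 1)
    (h1 : ∀ n, u 0 (n + 1) = u 0 n / ((n + 1) / 2))
    (h2 : ∀ l n, u (l + 1) (n + 1) = u l (n + 1) + u (l + 1) n / ((l + 1 : ℕ) + (n + 1) / 2))
    (l n : ℕ) : u l n = t l n := by
  induction n generalizing l with
  | zero => rw [h0]; rfl
  | succ n ihn =>
    induction l with
    | zero => rw [h1, t_zero_succ, ihn]
    | succ l ihl => rw [h2, t_succ_succ, ihl, ihn]

noncomputable def closedForm (k m : ℕ) : ℝ :=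
  m / (2 * k !) * (descPochhammerSum ℝ k m / m !)

theorem closedForm_zero_odd (l : ℕ) : closedForm 0 (2 * l + 1) = 1 := by
  rw [closedForm, descPochhammerSum_zero_succ, pow_mul, neg_one_sq, one_pow, Nat.factorial_succ]
  push_cast
  field_simp
  ring

theorem closedForm_succ_self (k : ℕ) : closedForm (k + 1) k = 0 := by
  simp [closedForm, descPochhammerSum_succ_self]

theorem closedForm_succ_add_two (k m : ℕ) :
    closedForm (k + 1) (m + 2) = closedForm (k + 1) m + 2 / (m + 1) * closedForm k (m + 1) := by
  simp only [closedForm, descPochhammerSum_succ_add_two, Nat.factorial_succ]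
  push_cast
  field_simp
  ring

theorem t_eq_closedForm (l n : ℕ) : t l n = closedForm n (n + 1 + 2 * l) := by
  refine (eq_t_of_recurrence (u := fun l n => closedForm n (n + 1 + 2 * l)) ?_ ?_ ?_ l n).symm
  · intro l
    simpa [add_comm] using closedForm_zero_odd l
  · intro n
    simp only [mul_zero, add_zero, closedForm_succ_add_two, closedForm_succ_self]
    field_simp
    ring
  · intro l n
    rw [show n + 1 + 1 + 2 * (l + 1) = n + 2 + 2 * l + 2 by ring, closedForm_succ_add_two,
      show n + 2 + 2 * l + 1 = n + 1 + 2 * (l + 1) by ring]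
    push_cast
    field_simp
    ring

/-- **Theorem 6** (with **Theorem 5**, equations (31)–(32)) of the paper: for
`n ≥ 1`, `l ≥ 0` and `m := n + 2l`,
`t_l(n-1) = (m / (2·(n-1)!)) · ∑_{j=0}^{m-n} ((j+n-1)!/j!) · L_m^j · s(m-1, j+n-1)`. -/
theorem t_closed_form (n : ℕ) (hn : 1 ≤ n) (l : ℕ) :
    t l (n - 1) =
      (((n + 2 * l : ℕ) : ℝ) / (2 * (Nat.factorial (n - 1) : ℝ))) *
        ∑ j ∈ Finset.range ((n + 2 * l) - n + 1),
          ((Nat.factorial (j + n - 1) : ℝ) / (Nat.factorial j : ℝ)) *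
            L (n + 2 * l) j * stirlingFirst ((n + 2 * l) - 1) (j + n - 1) := by
  obtain ⟨N, rfl⟩ : ∃ N, n = N + 1 := ⟨n - 1, by omega⟩
  have hdeg : (derivative^[N] (descPochhammer ℝ (N + 2 * l))).natDegree < 2 * l + 1 :=
    (natDegree_iterate_derivative _ _).trans_lt
      (by have := natDegree_descPochhammer_le (R := ℝ) (N + 2 * l); omega)
  simp only [Nat.add_sub_cancel, show N + 1 + 2 * l - (N + 1) = 2 * l by omega,
    show N + 1 + 2 * l - 1 = N + 2 * l by omega, show ∀ j, j + (N + 1) - 1 = j + N by omega]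
  rw [t_eq_closedForm, closedForm, descPochhammerSum, show N + 1 + 2 * l - 1 = N + 2 * l by omega,
    ← sum_coeff_mul_L _ hdeg]
  simp only [coeff_iterate_derivative_descPochhammer]
  exact congrArg _ (sum_congr rfl fun j _ => by ring)
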